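/- arXiv:2502.08183 — 4 statements merged into one kernel-verified Lean document; each statement's English description precedes it below -/
import Mathlib

section
/- Let σ ≥ 1 and 0 ≤ σ₁ < σ/2 < σ₂ ≤ σ be real numbers. Then there exist ε* ∈ (0,1) and constants c, C > 0 such that for all r ∈ (0, ε*): D(r) > 0 and c·r^{2(σ−σ₁)} ≤ −λ₁(r) ≤ C·r^{2(σ−σ₁)}, c·r^{2σ₁} ≤ −λ₂(r) ≤ C·r^{2σ₁}, and c·r^{2σ₁} ≤ λ₁(r) − λ₂(r) ≤ C·r^{2σ₁}. -/
set_option maxHeartbeats 1000000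


/-- The discriminant `D(r) = (r^{2σ₁} + r^{2σ₂})² − 4 r^{2σ}`. -/
noncomputable def Dfun (σ σ₁ σ₂ r : ℝ) : ℝ :=
  (r ^ (2 * σ₁) + r ^ (2 * σ₂)) ^ 2 - 4 * r ^ (2 * σ)

/-- The characteristic root `λ₁(r) = (−(r^{2σ₁}+r^{2σ₂}) + √D(r))/2`. -/
noncomputable def lam1 (σ σ₁ σ₂ r : ℝ) : ℝ :=
  (-(r ^ (2 * σ₁) + r ^ (2 * σ₂)) + Real.sqrt (Dfun σ σ₁ σ₂ r)) / 2

/-- The characteristic root `λ₂(r) = (−(r^{2σ₁}+r^{2σ₂}) − √D(r))/2`. -/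
noncomputable def lam2 (σ σ₁ σ₂ r : ℝ) : ℝ :=
  (-(r ^ (2 * σ₁) + r ^ (2 * σ₂)) - Real.sqrt (Dfun σ σ₁ σ₂ r)) / 2


/-- small-frequency asymptotics of the characteristic roots:
`−λ₁(r) ∼ r^{2(σ−σ₁)}`, `−λ₂(r) ∼ r^{2σ₁}`, `λ₁(r) − λ₂(r) ∼ r^{2σ₁}` for `r ∈ (0, ε*)`. -/
theorem stmt1 (σ σ₁ σ₂ : ℝ) (hσ : 1 ≤ σ) (h1 : 0 ≤ σ₁) (h2 : σ₁ < σ / 2)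
    (h3 : σ / 2 < σ₂) (h4 : σ₂ ≤ σ) :
    ∃ ε ∈ Set.Ioo (0 : ℝ) 1, ∃ c C : ℝ, 0 < c ∧ 0 < C ∧
      ∀ r ∈ Set.Ioo (0 : ℝ) ε,
        Dfun σ σ₁ σ₂ r > 0 ∧
        c * r ^ (2 * (σ - σ₁)) ≤ -(lam1 σ σ₁ σ₂ r) ∧
        -(lam1 σ σ₁ σ₂ r) ≤ C * r ^ (2 * (σ - σ₁)) ∧
        c * r ^ (2 * σ₁) ≤ -(lam2 σ σ₁ σ₂ r) ∧
        -(lam2 σ σ₁ σ₂ r) ≤ C * r ^ (2 * σ₁) ∧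
        c * r ^ (2 * σ₁) ≤ lam1 σ σ₁ σ₂ r - lam2 σ σ₁ σ₂ r ∧
        lam1 σ σ₁ σ₂ r - lam2 σ σ₁ σ₂ r ≤ C * r ^ (2 * σ₁) := by
  set δ : ℝ := 2 * σ - 4 * σ₁ with hδdef
  have hδ : 0 < δ := by simp only [hδdef]; linarith
  set E : ℝ := (3/16 : ℝ) ^ (1/δ) with hEdef
  have hEpos : 0 < E := Real.rpow_pos_of_pos (by norm_num) _
  refine ⟨min (1/2) E, ⟨lt_min (by norm_num) hEpos, lt_of_le_of_lt (min_le_left _ _) (by norm_num)⟩,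
    1/2, 2, by norm_num, by norm_num, ?_⟩
  rintro r ⟨hr0, hrε⟩
  have hr1 : r < 1 := lt_of_lt_of_le (lt_of_lt_of_le hrε (min_le_left _ _)) (by norm_num)
  have hrE : r ≤ E := le_of_lt (lt_of_lt_of_le hrε (min_le_right _ _))
  set a : ℝ := r ^ (2 * σ₁) with hadef
  set b : ℝ := r ^ (2 * σ₂) with hbdef
  set m : ℝ := r ^ (2 * σ) with hmdef
  have ha : 0 < a := Real.rpow_pos_of_pos hr0 _
  have hb : 0 < b := Real.rpow_pos_of_pos hr0 _
  have hm : 0 < m := Real.rpow_pos_of_pos hr0 _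
  have hab : b ≤ a := Real.rpow_le_rpow_of_exponent_ge hr0 hr1.le (by linarith)
  -- r^δ ≤ 3/16
  have hrδ : r ^ δ ≤ 3/16 := by
    calc r ^ δ ≤ E ^ δ := Real.rpow_le_rpow hr0.le hrE hδ.le
    _ = (3/16 : ℝ) ^ ((1/δ) * δ) := by rw [hEdef, ← Real.rpow_mul (by norm_num)]
    _ = 3/16 := by rw [one_div_mul_cancel hδ.ne', Real.rpow_one]
  -- m = a^2 * r^δ
  have hmA : m = a ^ 2 * r ^ δ := by
    rw [hadef, hmdef, sq, ← Real.rpow_add hr0, ← Real.rpow_add hr0]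
    ring_nf
    congr 1; rw [hδdef]; ring
  have h4m : 4 * m ≤ (3/4) * a ^ 2 := by
    have h2 : 0 < a ^ 2 := by positivity
    rw [hmA]
    nlinarith [Real.rpow_pos_of_pos hr0 δ]
  set rp : ℝ := r ^ (2 * (σ - σ₁)) with hrpdef
  have hrp : 0 < rp := Real.rpow_pos_of_pos hr0 _
  have hma : m = a * rp := by
    rw [hadef, hmdef, hrpdef, ← Real.rpow_add hr0]; ring_nf
  have hD : Dfun σ σ₁ σ₂ r = (a + b) ^ 2 - 4 * m := rfl
  have hDpos : 0 < Dfun σ σ₁ σ₂ r := by rw [hD]; nlinarith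
  have hD4 : a ^ 2 / 4 ≤ Dfun σ σ₁ σ₂ r := by rw [hD]; nlinarith
  set s : ℝ := Real.sqrt (Dfun σ σ₁ σ₂ r) with hsdef
  have hsq : s ^ 2 = Dfun σ σ₁ σ₂ r := Real.sq_sqrt hDpos.le
  have hs0 : 0 ≤ s := Real.sqrt_nonneg _
  have hs1 : a / 2 ≤ s := by
    rw [hsdef]
    rw [show a / 2 = Real.sqrt ((a/2)^2) from (Real.sqrt_sq (by positivity)).symm]
    exact Real.sqrt_le_sqrt (by nlinarith)
  have hs2 : s ≤ a + b := by
    rw [hsdef]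
    rw [show a + b = Real.sqrt ((a+b)^2) from (Real.sqrt_sq (by positivity)).symm]
    exact Real.sqrt_le_sqrt (by rw [hD]; nlinarith)
  have hl1 : lam1 σ σ₁ σ₂ r = (-(a + b) + s) / 2 := rfl
  have hl2 : lam2 σ σ₁ σ₂ r = (-(a + b) - s) / 2 := rfl
  -- key identity: (a+b-s)*(a+b+s) = 4*m
  have hkey : ((a + b) - s) * ((a + b) + s) = 4 * m := by
    have : ((a+b) - s) * ((a+b) + s) = (a+b)^2 - s^2 := by ring
    rw [this, hsq, hD]; ring
  refine ⟨hDpos, ?_, ?_, ?_, ?_, ?_, ?_⟩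
  · -- (1/2) rp ≤ -(lam1) = (a+b-s)/2, i.e. rp ≤ a+b-s
    rw [hl1]
    rw [hma] at hkey
    nlinarith [mul_pos ha hrp]
  · rw [hl1]
    rw [hma] at hkey
    nlinarith [mul_pos ha hrp]
  · rw [hl2]; show (1:ℝ)/2 * a ≤ _; nlinarith
  · rw [hl2]; show _ ≤ (2:ℝ) * a; nlinarith
  · rw [hl1, hl2]; show (1:ℝ)/2 * a ≤ _; nlinarith
  · rw [hl1, hl2]; show _ ≤ (2:ℝ) * a; nlinarith
end

section
/- Let σ ≥ 1 and 0 ≤ σ₁ < σ/2 < σ₂ ≤ σ be real numbers. Then there exist ε* ∈ (0,1) and constants c, C > 0 such that for all r > 1/ε*: D(r) > 0 and c·r^{2(σ−σ₂)} ≤ −λ₁(r) ≤ C·r^{2(σ−σ₂)}, c·r^{2σ₂} ≤ −λ₂(r) ≤ C·r^{2σ₂}, and c·r^{2σ₂} ≤ λ₁(r) − λ₂(r) ≤ C·r^{2σ₂}. -/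
/-- large-frequency asymptotics of the characteristic roots:
`−λ₁(r) ∼ r^{2(σ−σ₂)}`, `−λ₂(r) ∼ r^{2σ₂}`, `λ₁(r) − λ₂(r) ∼ r^{2σ₂}` for `r > 1/ε*`. -/
theorem stmt2 (σ σ₁ σ₂ : ℝ) (hσ : 1 ≤ σ) (h1 : 0 ≤ σ₁) (h2 : σ₁ < σ / 2)
    (h3 : σ / 2 < σ₂) (h4 : σ₂ ≤ σ) :
    ∃ ε ∈ Set.Ioo (0 : ℝ) 1, ∃ c C : ℝ, 0 < c ∧ 0 < C ∧
      ∀ r : ℝ, 1 / ε < r →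
        Dfun σ σ₁ σ₂ r > 0 ∧
        c * r ^ (2 * (σ - σ₂)) ≤ -(lam1 σ σ₁ σ₂ r) ∧
        -(lam1 σ σ₁ σ₂ r) ≤ C * r ^ (2 * (σ - σ₂)) ∧
        c * r ^ (2 * σ₂) ≤ -(lam2 σ σ₁ σ₂ r) ∧
        -(lam2 σ σ₁ σ₂ r) ≤ C * r ^ (2 * σ₂) ∧
        c * r ^ (2 * σ₂) ≤ lam1 σ σ₁ σ₂ r - lam2 σ σ₁ σ₂ r ∧
        lam1 σ σ₁ σ₂ r - lam2 σ σ₁ σ₂ r ≤ C * r ^ (2 * σ₂) := by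
  set δ : ℝ := 4 * σ₂ - 2 * σ with hδdef
  have hδ : 0 < δ := by simp only [hδdef]; linarith
  set M : ℝ := max 2 ((8 : ℝ) ^ δ⁻¹) with hMdef
  have hM2 : (2 : ℝ) ≤ M := le_max_left _ _
  have hM0 : 0 < M := by linarith
  refine ⟨1 / M, ⟨by positivity, by rw [div_lt_one hM0]; linarith⟩,
    1 / 2, 2, by norm_num, by norm_num, ?_⟩
  intro r hr
  rw [one_div_one_div] at hr
  have hr1 : (1 : ℝ) < r := by linarith
  have hr0 : (0 : ℝ) < r := by linarith
  have hr8 : (8 : ℝ) ≤ r ^ δ := by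
    have h8 : (8 : ℝ) ^ δ⁻¹ ≤ r := le_trans (le_max_right _ _) (by linarith)
    calc (8 : ℝ) = ((8 : ℝ) ^ δ⁻¹) ^ δ := by
          rw [← Real.rpow_mul (by norm_num : (0:ℝ) ≤ 8), inv_mul_cancel₀ hδ.ne',
            Real.rpow_one]
      _ ≤ r ^ δ := Real.rpow_le_rpow (by positivity) h8 hδ.le
  set a : ℝ := r ^ (2 * σ₁) with hadef
  set b : ℝ := r ^ (2 * σ₂) with hbdef
  set s : ℝ := r ^ (2 * σ) with hsdef
  set q : ℝ := r ^ (2 * (σ - σ₂)) with hqdef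
  have ha0 : 0 < a := Real.rpow_pos_of_pos hr0 _
  have hb0 : 0 < b := Real.rpow_pos_of_pos hr0 _
  have hs0 : 0 < s := Real.rpow_pos_of_pos hr0 _
  have hq0 : 0 < q := Real.rpow_pos_of_pos hr0 _
  have hab : a ≤ b := Real.rpow_le_rpow_of_exponent_le hr1.le (by linarith)
  have hbb : b * b = s * r ^ δ := by
    rw [hbdef, hsdef, ← Real.rpow_add hr0, ← Real.rpow_add hr0, hδdef]
    ring_nf
  have hqb : q * b = s := by
    rw [hqdef, hbdef, hsdef, ← Real.rpow_add hr0]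
    ring_nf
  have hrδ0 : 0 < r ^ δ := Real.rpow_pos_of_pos hr0 _
  have hD : Dfun σ σ₁ σ₂ r = (a + b) ^ 2 - 4 * s := rfl
  have hDge : b * b / 2 ≤ Dfun σ σ₁ σ₂ r := by
    rw [hD]
    nlinarith [sq_nonneg (a + b), sq_nonneg a, mul_pos ha0 hb0]
  have hDpos : 0 < Dfun σ σ₁ σ₂ r := by nlinarith
  have hDle : Dfun σ σ₁ σ₂ r ≤ (a + b) ^ 2 := by rw [hD]; linarith
  set S : ℝ := Real.sqrt (Dfun σ σ₁ σ₂ r) with hSdef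
  have hS0 : 0 ≤ S := Real.sqrt_nonneg _
  have hSsq : S ^ 2 = Dfun σ σ₁ σ₂ r := Real.sq_sqrt hDpos.le
  have hSle : S ≤ a + b := by
    rw [hSdef]
    calc Real.sqrt (Dfun σ σ₁ σ₂ r) ≤ Real.sqrt ((a + b) ^ 2) :=
          Real.sqrt_le_sqrt hDle
      _ = a + b := Real.sqrt_sq (by positivity)
  have hSge : b / 2 ≤ S := by
    rw [hSdef]
    rw [show b / 2 = Real.sqrt ((b/2)^2) from (Real.sqrt_sq (by positivity)).symm]
    apply Real.sqrt_le_sqrt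
    nlinarith
  have hl1 : lam1 σ σ₁ σ₂ r = (-(a + b) + S) / 2 := rfl
  have hl2 : lam2 σ σ₁ σ₂ r = (-(a + b) - S) / 2 := rfl
  have hSsq' : S ^ 2 = (a + b) ^ 2 - 4 * s := by rw [hSsq, hD]
  have hkey : (a + b - S) * (a + b + S) = 4 * s := by linear_combination -hSsq'
  have hTlo : b ≤ a + b + S := by linarith
  have hThi : a + b + S ≤ 4 * b := by linarith
  have hTpos : 0 < a + b + S := by linarith
  have e1 : q * (a + b + S) ≤ (a + b - S) * (a + b + S) := by
    rw [hkey]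
    calc q * (a + b + S) ≤ q * (4 * b) := mul_le_mul_of_nonneg_left hThi hq0.le
      _ = 4 * (q * b) := by ring
      _ = 4 * s := by rw [hqb]
  have e2 : (a + b - S) * (a + b + S) ≤ (4 * q) * (a + b + S) := by
    rw [hkey]
    calc 4 * s = (4 * q) * b := by rw [← hqb]; ring
      _ ≤ (4 * q) * (a + b + S) := mul_le_mul_of_nonneg_left hTlo (by positivity)
  have elo : q ≤ a + b - S := le_of_mul_le_mul_right e1 hTpos
  have ehi : a + b - S ≤ 4 * q := le_of_mul_le_mul_right e2 hTpos
  refine ⟨hDpos, ?_, ?_, ?_, ?_, ?_, ?_⟩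
  · rw [hl1]; linarith
  · rw [hl1]; linarith
  · rw [hl2]; linarith
  · rw [hl2]; linarith
  · rw [hl1, hl2]; linarith
  · rw [hl1, hl2]; linarith
end

section
/- Let σ ≥ 1 and 0 ≤ σ₁ < σ/2 < σ₂ ≤ σ be real numbers. Then there exist ε* ∈ (0,1) and constants c, C > 0 such that for all r ∈ (0, ε*) and all t ≥ 0: 0 ≤ K̂₁(t,r) ≤ C·r^{−2σ₁}·e^{−c·r^{2(σ−σ₁)}·t}. -/
/-- The kernel symbol `K̂₁(t,r) = (e^{λ₁(r)t} − e^{λ₂(r)t})/(λ₁(r) − λ₂(r))`. -/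
noncomputable def K1hat (σ σ₁ σ₂ r t : ℝ) : ℝ :=
  (Real.exp (lam1 σ σ₁ σ₂ r * t) - Real.exp (lam2 σ σ₁ σ₂ r * t)) /
    (lam1 σ σ₁ σ₂ r - lam2 σ σ₁ σ₂ r)

/-!
With `a = r^{2σ₁}`, `b = r^{2σ₂}` and `p = r^{2σ}`, the roots `λ₂ < λ₁ < 0` solve
`λ² + (a + b) λ + p = 0`. For `r ≤ 1` we have `b ≤ a`, and `p = r^{2(σ - 2σ₁)} a²` is small
compared with `a²` when `r` is small, so `λ₁ - λ₂ = √D ≥ a / 2`. Since `λ₁ λ₂ = p` and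
`λ₂ ≥ -(a + b) ≥ -2a`, the slow root satisfies `λ₁ ≤ -p / (2a) = -r^{2(σ - σ₁)} / 2`. Finally
`K̂₁ ≤ e^{λ₁ t} / (λ₁ - λ₂) ≤ 2 a⁻¹ e^{λ₁ t}`.
-/

open Real Filter Topology Set

lemma div_sub_exp_mul_nonneg_and_le {x y t : ℝ} (hyx : y < x) (ht : 0 ≤ t) :
    0 ≤ (exp (x * t) - exp (y * t)) / (x - y) ∧
      (exp (x * t) - exp (y * t)) / (x - y) ≤ exp (x * t) / (x - y) := by
  have hxy : 0 < x - y := sub_pos.2 hyx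
  have hexp : exp (y * t) ≤ exp (x * t) := exp_le_exp.2 (by nlinarith)
  exact ⟨div_nonneg (sub_nonneg.2 hexp) hxy.le,
    div_le_div_of_nonneg_right (by linarith [exp_pos (y * t)]) hxy.le⟩

lemma neg_add_sqrt_sq_sub_div_two_le {s p : ℝ} (hs : 0 < s) (hps : 4 * p ≤ s ^ 2) :
    (-s + √(s ^ 2 - 4 * p)) / 2 ≤ -p / s := by
  have h2p : 2 * p / s ≤ s := by
    rw [div_le_iff₀ hs]; nlinarith
  have hsq : (s - 2 * p / s) ^ 2 = s ^ 2 - 4 * p + (2 * p / s) ^ 2 := by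
    field_simp; ring
  have hsqrt : √(s ^ 2 - 4 * p) ≤ s - 2 * p / s :=
    sqrt_le_iff.2 ⟨by linarith, by nlinarith [sq_nonneg (2 * p / s)]⟩
  calc (-s + √(s ^ 2 - 4 * p)) / 2 ≤ (-s + (s - 2 * p / s)) / 2 := by linarith
    _ = -p / s := by ring

lemma eventually_rpow_le_nhdsGT_zero {e δ : ℝ} (he : 0 < e) (hδ : 0 < δ) :
    ∀ᶠ r in 𝓝[>] (0 : ℝ), r ^ e ≤ δ :=
  nhdsWithin_le_nhds <| (tendsto_id.rpow_const_nhds_zero he).eventually (eventually_le_nhds hδ)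

lemma lam1_sub_lam2 (σ σ₁ σ₂ r : ℝ) :
    lam1 σ σ₁ σ₂ r - lam2 σ σ₁ σ₂ r = √(Dfun σ σ₁ σ₂ r) := by
  unfold lam1 lam2; ring

section SmallFrequency

variable {σ σ₁ σ₂ r : ℝ}

lemma rpow_div_two_le_sqrt_Dfun (hr0 : 0 < r) (hsmall : r ^ (2 * (σ - 2 * σ₁)) ≤ 1 / 8) :
    r ^ (2 * σ₁) / 2 ≤ √(Dfun σ σ₁ σ₂ r) := by
  have ha : 0 < r ^ (2 * σ₁) := rpow_pos_of_pos hr0 _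
  have hb : 0 < r ^ (2 * σ₂) := rpow_pos_of_pos hr0 _
  have hp : r ^ (2 * σ) = r ^ (2 * (σ - 2 * σ₁)) * (r ^ (2 * σ₁)) ^ 2 := by
    rw [← rpow_natCast, ← rpow_mul hr0.le, ← rpow_add hr0]; ring_nf
  refine le_sqrt_of_sq_le ?_
  unfold Dfun
  rw [hp]
  nlinarith [mul_le_mul_of_nonneg_right hsmall (sq_nonneg (r ^ (2 * σ₁)))]

lemma lam1_le_neg_half_mul_rpow (h12 : σ₁ ≤ σ₂) (hr0 : 0 < r) (hr1 : r ≤ 1)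
    (hD : 0 ≤ Dfun σ σ₁ σ₂ r) :
    lam1 σ σ₁ σ₂ r ≤ -(1 / 2) * r ^ (2 * (σ - σ₁)) := by
  set a := r ^ (2 * σ₁) with ha_def
  set b := r ^ (2 * σ₂)
  have ha : 0 < a := rpow_pos_of_pos hr0 _
  have hb : 0 < b := rpow_pos_of_pos hr0 _
  have hba : b ≤ a := rpow_le_rpow_of_exponent_ge hr0 hr1 (by linarith)
  have hp : r ^ (2 * σ) = r ^ (2 * (σ - σ₁)) * a := by
    rw [ha_def, ← rpow_add hr0]; ring_nf
  calc lam1 σ σ₁ σ₂ r ≤ -r ^ (2 * σ) / (a + b) :=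
        neg_add_sqrt_sq_sub_div_two_le (by positivity) (by unfold Dfun at hD; linarith)
    _ ≤ -r ^ (2 * σ) / (2 * a) := by
      rw [neg_div, neg_div, neg_le_neg_iff]
      exact div_le_div_of_nonneg_left (by positivity) (by positivity) (by linarith)
    _ = -(1 / 2) * r ^ (2 * (σ - σ₁)) := by rw [hp]; field_simp

lemma K1hat_nonneg_and_le_of_rpow_le {t : ℝ} (h12 : σ₁ ≤ σ₂) (hr0 : 0 < r) (hr1 : r ≤ 1)
    (hsmall : r ^ (2 * (σ - 2 * σ₁)) ≤ 1 / 8) (ht : 0 ≤ t) :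
    0 ≤ K1hat σ σ₁ σ₂ r t ∧
      K1hat σ σ₁ σ₂ r t ≤ 2 * r ^ (-(2 * σ₁)) * exp (-(1 / 2) * r ^ (2 * (σ - σ₁)) * t) := by
  have ha : 0 < r ^ (2 * σ₁) := rpow_pos_of_pos hr0 _
  have hsqrtD := rpow_div_two_le_sqrt_Dfun (σ₂ := σ₂) hr0 hsmall
  have hlam1 := lam1_le_neg_half_mul_rpow h12 hr0 hr1 (sqrt_pos.1 (by linarith)).le
  obtain ⟨hnonneg, hle⟩ := div_sub_exp_mul_nonneg_and_le (x := lam1 σ σ₁ σ₂ r)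
    (y := lam2 σ σ₁ σ₂ r) (by rw [← sub_pos, lam1_sub_lam2]; linarith) ht
  refine ⟨hnonneg, hle.trans ?_⟩
  rw [lam1_sub_lam2, rpow_neg hr0.le]
  calc exp (lam1 σ σ₁ σ₂ r * t) / √(Dfun σ σ₁ σ₂ r)
      ≤ exp (lam1 σ σ₁ σ₂ r * t) / (r ^ (2 * σ₁) / 2) :=
        div_le_div_of_nonneg_left (exp_pos _).le (by positivity) hsqrtD
    _ = 2 * (r ^ (2 * σ₁))⁻¹ * exp (lam1 σ σ₁ σ₂ r * t) := by field_simp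
    _ ≤ 2 * (r ^ (2 * σ₁))⁻¹ * exp (-(1 / 2) * r ^ (2 * (σ - σ₁)) * t) := by gcongr

end SmallFrequency

theorem stmt5_general (σ σ₁ σ₂ : ℝ) (h2 : σ₁ < σ / 2)
    (h3 : σ / 2 < σ₂) :
    ∃ ε ∈ Set.Ioo (0 : ℝ) 1, ∃ c C : ℝ, 0 < c ∧ 0 < C ∧
      ∀ r ∈ Set.Ioo (0 : ℝ) ε, ∀ t : ℝ, 0 ≤ t →
        0 ≤ K1hat σ σ₁ σ₂ r t ∧
        K1hat σ σ₁ σ₂ r t ≤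
          C * r ^ (-(2 * σ₁)) * Real.exp (-c * r ^ (2 * (σ - σ₁)) * t) := by
  have hsmall := eventually_rpow_le_nhdsGT_zero (e := 2 * (σ - 2 * σ₁)) (δ := 1 / 8)
    (by linarith) (by norm_num)
  obtain ⟨ε, ⟨hε0, hε⟩, hεsub⟩ :=
    (mem_nhdsGT_iff_exists_mem_Ioc_Ioo_subset (by norm_num : (0 : ℝ) < 1 / 2)).1 hsmall
  refine ⟨ε, ⟨hε0, by linarith⟩, 1 / 2, 2, by norm_num, by norm_num, ?_⟩
  intro r hr t ht
  exact K1hat_nonneg_and_le_of_rpow_le (by linarith) hr.1 (by linarith [hr.2]) (hεsub hr) ht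

/-- small-frequency kernel bound
`0 ≤ K̂₁(t,r) ≤ C r^{−2σ₁} e^{−c r^{2(σ−σ₁)} t}` for `r ∈ (0, ε*)`, `t ≥ 0`. -/
theorem stmt5 (σ σ₁ σ₂ : ℝ) (hσ : 1 ≤ σ) (h1 : 0 ≤ σ₁) (h2 : σ₁ < σ / 2)
    (h3 : σ / 2 < σ₂) (h4 : σ₂ ≤ σ) :
    ∃ ε ∈ Set.Ioo (0 : ℝ) 1, ∃ c C : ℝ, 0 < c ∧ 0 < C ∧
      ∀ r ∈ Set.Ioo (0 : ℝ) ε, ∀ t : ℝ, 0 ≤ t →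
        0 ≤ K1hat σ σ₁ σ₂ r t ∧
        K1hat σ σ₁ σ₂ r t ≤
          C * r ^ (-(2 * σ₁)) * Real.exp (-c * r ^ (2 * (σ - σ₁)) * t) :=
  stmt5_general σ σ₁ σ₂ h2 h3
end

section
/- Let σ ≥ 1 and 0 ≤ σ₁ < σ/2 < σ₂ ≤ σ be real numbers. Then there exist ε* ∈ (0,1) and constants c, C > 0 such that for all r > 1/ε* and all t ≥ 0: 0 ≤ K̂₁(t,r) ≤ C·r^{−2σ₂}·e^{−c·r^{2(σ−σ₂)}·t}. -/
/-!
With `p = r^{2σ₁}`, `q = r^{2σ₂}`, `m = r^{2σ}` and `a = p + q`, the roots are `(-a ± √(a² - 4m))/2`.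
For `r ≥ 1` we have `q ≤ a ≤ 2q`, and since `4σ₂ > 2σ` the product `m` is eventually negligible
against `q²`. Then `λ₁ - λ₂ = √(a² - 4m) ≥ q/2`, while `a - √(a² - 4m) = 4m/(a + √(a² - 4m)) ≥ m/q`
shows `λ₁ ≤ -r^{2(σ - σ₂)}/2`. The kernel is a difference quotient of exponentials with `λ₂ ≤ λ₁`,
so it lies between `0` and `e^{λ₁ t}/(λ₁ - λ₂) ≤ 2 q⁻¹ e^{-r^{2(σ-σ₂)} t/2}`.
-/

open Real

section Roots

variable {a q m : ℝ}

lemma half_le_sqrt_sq_sub (hq : 0 ≤ q) (hqa : q ≤ a) (hm : 8 * m ≤ q ^ 2) :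
    q / 2 ≤ √(a ^ 2 - 4 * m) :=
  le_sqrt_of_sq_le (by nlinarith)

lemma div_le_sub_sqrt_sq_sub (hm : 0 ≤ m) (hq : 0 < q) (hqa : q ≤ a) (ha : a ≤ 2 * q)
    (h4m : 4 * m ≤ a ^ 2) : m / q ≤ a - √(a ^ 2 - 4 * m) := by
  set s := √(a ^ 2 - 4 * m)
  have hs : 0 ≤ s := sqrt_nonneg _
  have hsa : s ≤ a := sqrt_le_iff.2 ⟨by linarith, by linarith⟩
  have hprod : (a - s) * (a + s) = 4 * m := by
    have : s ^ 2 = a ^ 2 - 4 * m := sq_sqrt (by linarith)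
    linear_combination -this
  rw [div_le_iff₀ hq]
  nlinarith

end Roots

lemma exp_mul_sub_exp_mul_div_nonneg {l₁ l₂ s t : ℝ} (hl : l₂ ≤ l₁) (hs : 0 ≤ s) (ht : 0 ≤ t) :
    0 ≤ (exp (l₁ * t) - exp (l₂ * t)) / s := by
  have : exp (l₂ * t) ≤ exp (l₁ * t) := exp_le_exp.2 (mul_le_mul_of_nonneg_right hl ht)
  exact div_nonneg (sub_nonneg.2 this) hs

lemma exp_mul_sub_exp_mul_div_le {l₁ l₂ s t b c : ℝ} (hl₁ : l₁ ≤ c) (hb : 0 < b) (hbs : b ≤ s)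
    (ht : 0 ≤ t) : (exp (l₁ * t) - exp (l₂ * t)) / s ≤ exp (c * t) / b :=
  calc (exp (l₁ * t) - exp (l₂ * t)) / s
      ≤ exp (l₁ * t) / s :=
        div_le_div_of_nonneg_right (sub_le_self _ (exp_pos _).le) (hb.le.trans hbs)
    _ ≤ exp (c * t) / b := by gcongr

section Kernel

variable {σ σ₁ σ₂ r : ℝ}

lemma lam2_le_lam1 : lam2 σ σ₁ σ₂ r ≤ lam1 σ σ₁ σ₂ r := by
  unfold lam1 lam2
  linarith [sqrt_nonneg (Dfun σ σ₁ σ₂ r)]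

lemma K1hat_eq_div_sqrt (t : ℝ) :
    K1hat σ σ₁ σ₂ r t =
      (exp (lam1 σ σ₁ σ₂ r * t) - exp (lam2 σ σ₁ σ₂ r * t)) / √(Dfun σ σ₁ σ₂ r) := by
  rw [K1hat]
  congr 1
  unfold lam1 lam2
  ring

lemma K1hat_bounds (hσ₁₂ : σ₁ ≤ σ₂) (hr : 1 ≤ r) (hr8 : 8 * r ^ (2 * σ) ≤ (r ^ (2 * σ₂)) ^ 2)
    {t : ℝ} (ht : 0 ≤ t) :
    0 ≤ K1hat σ σ₁ σ₂ r t ∧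
      K1hat σ σ₁ σ₂ r t ≤ 2 * r ^ (-(2 * σ₂)) * exp (-(1 / 2) * r ^ (2 * (σ - σ₂)) * t) := by
  have hr0 : 0 < r := by linarith
  set p := r ^ (2 * σ₁)
  set q := r ^ (2 * σ₂)
  set m := r ^ (2 * σ)
  have hp : 0 < p := rpow_pos_of_pos hr0 _
  have hq : 0 < q := rpow_pos_of_pos hr0 _
  have hm : 0 < m := rpow_pos_of_pos hr0 _
  have hpq : p ≤ q := rpow_le_rpow_of_exponent_le hr (by linarith)
  have hD : Dfun σ σ₁ σ₂ r = (p + q) ^ 2 - 4 * m := rfl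
  have hsqrt : q / 2 ≤ √(Dfun σ σ₁ σ₂ r) := by
    rw [hD]; exact half_le_sqrt_sq_sub hq.le (by linarith) hr8
  have hmq : m / q = r ^ (2 * (σ - σ₂)) := by
    rw [← rpow_sub hr0]; ring_nf
  have hlam1 : lam1 σ σ₁ σ₂ r ≤ -(1 / 2) * r ^ (2 * (σ - σ₂)) := by
    have := div_le_sub_sqrt_sq_sub hm.le hq (a := p + q) (by linarith) (by linarith)
      (by nlinarith)
    rw [← hD, hmq] at this
    unfold lam1
    linarith
  refine ⟨K1hat_eq_div_sqrt t ▸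
    exp_mul_sub_exp_mul_div_nonneg lam2_le_lam1 (sqrt_nonneg _) ht, ?_⟩
  rw [rpow_neg hr0.le]
  calc K1hat σ σ₁ σ₂ r t ≤ exp (-(1 / 2) * r ^ (2 * (σ - σ₂)) * t) / (q / 2) :=
        K1hat_eq_div_sqrt t ▸ exp_mul_sub_exp_mul_div_le hlam1 (by positivity) hsqrt ht
    _ = 2 * q⁻¹ * exp (-(1 / 2) * r ^ (2 * (σ - σ₂)) * t) := by ring

end Kernel

lemma exists_forall_gt_eight_mul_rpow_le {σ σ₂ : ℝ} (h : σ / 2 < σ₂) :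
    ∃ R : ℝ, 1 < R ∧ ∀ r : ℝ, R < r → 8 * r ^ (2 * σ) ≤ (r ^ (2 * σ₂)) ^ 2 := by
  obtain ⟨R, hR⟩ := Filter.eventually_atTop.1
    ((tendsto_rpow_atTop (by linarith : 0 < 4 * σ₂ - 2 * σ)).eventually_ge_atTop 8)
  refine ⟨max R 2, by simp, fun r hr => ?_⟩
  have hr0 : 0 < r := by linarith [le_max_right R 2]
  have h8 := hR r (le_of_max_le_left hr.le)
  calc 8 * r ^ (2 * σ) ≤ r ^ (4 * σ₂ - 2 * σ) * r ^ (2 * σ) := by gcongr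
    _ = (r ^ (2 * σ₂)) ^ 2 := by
        rw [← rpow_add hr0, ← rpow_natCast, ← rpow_mul hr0.le]; ring_nf

theorem stmt6_general (σ σ₁ σ₂ : ℝ) (h2 : σ₁ < σ / 2)
    (h3 : σ / 2 < σ₂) :
    ∃ ε ∈ Set.Ioo (0 : ℝ) 1, ∃ c C : ℝ, 0 < c ∧ 0 < C ∧
      ∀ r : ℝ, 1 / ε < r → ∀ t : ℝ, 0 ≤ t →
        0 ≤ K1hat σ σ₁ σ₂ r t ∧
        K1hat σ σ₁ σ₂ r t ≤
          C * r ^ (-(2 * σ₂)) * Real.exp (-c * r ^ (2 * (σ - σ₂)) * t) := by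
  obtain ⟨R, hR1, hR⟩ := exists_forall_gt_eight_mul_rpow_le h3
  refine ⟨1 / R, ⟨by positivity, (div_lt_one (by linarith)).2 hR1⟩, 1 / 2, 2, by norm_num,
    by norm_num, fun r hr t ht => ?_⟩
  rw [one_div_one_div] at hr
  exact K1hat_bounds (by linarith) (by linarith) (hR r hr) ht

/-- large-frequency kernel bound
`0 ≤ K̂₁(t,r) ≤ C r^{−2σ₂} e^{−c r^{2(σ−σ₂)} t}` for `r > 1/ε*`, `t ≥ 0`. -/
theorem stmt6 (σ σ₁ σ₂ : ℝ) (hσ : 1 ≤ σ) (h1 : 0 ≤ σ₁) (h2 : σ₁ < σ / 2)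
    (h3 : σ / 2 < σ₂) (h4 : σ₂ ≤ σ) :
    ∃ ε ∈ Set.Ioo (0 : ℝ) 1, ∃ c C : ℝ, 0 < c ∧ 0 < C ∧
      ∀ r : ℝ, 1 / ε < r → ∀ t : ℝ, 0 ≤ t →
        0 ≤ K1hat σ σ₁ σ₂ r t ∧
        K1hat σ σ₁ σ₂ r t ≤
          C * r ^ (-(2 * σ₂)) * Real.exp (-c * r ^ (2 * (σ - σ₂)) * t) :=
  stmt6_general σ σ₁ σ₂ h2 h3
end
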